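/- Let ψ : ℝ → ℝ be a bounded, twice continuously differentiable function with ψ > 0, and suppose there exists λ > 0 such that ψ''(x) − ψ'(x) ≥ λ·ψ(x) for all x ∈ ℝ. Then no such ψ exists; equivalently, if ψ'' − ψ' ≥ λψ holds everywhere for a bounded positive C² function ψ, then λ ≤ 0. -/

import Mathlib

/-!
Maximum principle. Suppose `λ > 0` and pick `q < 0` with `q² - q ≤ λ`. The barrier
`v = c (eˣ + e^{qx})` satisfies `L v ≤ λ v` for `L φ = φ'' - φ'` and tends to `+∞` at both ends of
`ℝ`, while `ψ` is bounded. Hence `ψ - v` attains a global maximum at some `x₀`, where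
`(ψ - v)'(x₀) = 0` and `(ψ - v)''(x₀) ≤ 0`, so `λ (ψ - v)(x₀) ≤ L (ψ - v)(x₀) ≤ 0`. Thus `ψ ≤ v`
everywhere, and `c = ψ(0)/4` gives `ψ(0) ≤ ψ(0)/2`, contradicting `ψ > 0`.
-/

open Real Filter Topology

/-- The operator `L φ = φ'' - φ'`. -/
noncomputable def driftLaplacian (f : ℝ → ℝ) (x : ℝ) : ℝ := deriv (deriv f) x - deriv f x

theorem driftLaplacian_sub {u v : ℝ → ℝ} (hu : ContDiff ℝ 2 u) (hv : ContDiff ℝ 2 v) (x : ℝ) :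
    driftLaplacian (u - v) x = driftLaplacian u x - driftLaplacian v x := by
  have hderiv : deriv (u - v) = deriv u - deriv v :=
    funext fun y => deriv_sub (hu.differentiable two_ne_zero y) (hv.differentiable two_ne_zero y)
  rw [driftLaplacian, driftLaplacian, driftLaplacian, hderiv,
    deriv_sub (hu.differentiable_deriv_two x) (hv.differentiable_deriv_two x)]
  simp only [Pi.sub_apply]
  ring

theorem IsLocalMax.deriv_deriv_nonpos {f : ℝ → ℝ} {a : ℝ} (h : IsLocalMax f a)
    (hc : ContinuousAt f a) : deriv (deriv f) a ≤ 0 := by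
  by_contra! hpos
  have hmin := isLocalMin_of_deriv_deriv_pos hpos h.deriv_eq_zero hc
  have hconst : f =ᶠ[𝓝 a] fun _ => f a := (hmin.and h).mono fun y hy => le_antisymm hy.2 hy.1
  have hderiv : deriv f =ᶠ[𝓝 a] fun _ => 0 :=
    hconst.eventuallyEq_nhds.mono fun y hy => by rw [hy.deriv_eq, deriv_const]
  rw [hderiv.deriv_eq, deriv_const] at hpos
  exact hpos.false

theorem nonpos_of_mul_le_driftLaplacian {f : ℝ → ℝ} {lam : ℝ} (hlam : 0 < lam)
    (hf : Continuous f) (hL : ∀ x, lam * f x ≤ driftLaplacian f x)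
    (hcocompact : ∀ᶠ x in cocompact ℝ, f x ≤ 0) (x : ℝ) : f x ≤ 0 := by
  by_contra! hx
  obtain ⟨x₀, hx₀⟩ := hf.exists_forall_ge' x (hcocompact.mono fun y hy => hy.trans hx.le)
  have hmax : IsLocalMax f x₀ := Eventually.of_forall hx₀
  have hL₀ := hL x₀
  rw [driftLaplacian, hmax.deriv_eq_zero] at hL₀
  nlinarith [hmax.deriv_deriv_nonpos hf.continuousAt, hx₀ x]

theorem driftLaplacian_comparison {u v : ℝ → ℝ} {lam : ℝ} (hlam : 0 < lam)
    (hu : ContDiff ℝ 2 u) (hv : ContDiff ℝ 2 v)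
    (hLu : ∀ x, lam * u x ≤ driftLaplacian u x) (hLv : ∀ x, driftLaplacian v x ≤ lam * v x)
    (hcocompact : ∀ᶠ x in cocompact ℝ, u x ≤ v x) (x : ℝ) : u x ≤ v x := by
  refine sub_nonpos.mp <| nonpos_of_mul_le_driftLaplacian (f := u - v) hlam
    (hu.continuous.sub hv.continuous) (fun y => ?_) (hcocompact.mono fun y hy => sub_nonpos.mpr hy) x
  rw [driftLaplacian_sub hu hv]
  simp only [Pi.sub_apply]
  linarith [hLu y, hLv y]

noncomputable def expBarrier (q x : ℝ) : ℝ := exp x + exp (q * x)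

theorem contDiff_expBarrier (q : ℝ) : ContDiff ℝ 2 (expBarrier q) := by
  unfold expBarrier
  fun_prop

theorem tendsto_expBarrier_cocompact {q : ℝ} (hq : q < 0) :
    Tendsto (expBarrier q) (cocompact ℝ) atTop := by
  rw [cocompact_eq_atBot_atTop, tendsto_sup]
  constructor
  · exact tendsto_atTop_add_left_of_le _ 0 (fun x => (exp_pos x).le)
      (tendsto_exp_atTop.comp (tendsto_id.const_mul_atBot_of_neg hq))
  · exact tendsto_atTop_add_right_of_le _ 0 tendsto_exp_atTop (fun x => (exp_pos _).le)

theorem driftLaplacian_const_mul_expBarrier (c q x : ℝ) :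
    driftLaplacian (fun y => c * expBarrier q y) x = c * (q ^ 2 - q) * exp (q * x) := by
  have hasDeriv (a b y : ℝ) : HasDerivAt (fun y => a * exp y + b * exp (q * y))
      (a * exp y + b * q * exp (q * y)) y := by
    have hq : HasDerivAt (fun y => exp (q * y)) (exp (q * y) * q) y := by
      simpa using ((hasDerivAt_id y).const_mul q).exp
    exact (((hasDerivAt_exp y).const_mul a).add (hq.const_mul b)).congr_deriv (by ring)
  have hfun : (fun y => c * expBarrier q y) = fun y => c * exp y + c * exp (q * y) :=
    funext fun y => mul_add _ _ _
  have hderiv : deriv (fun y => c * exp y + c * exp (q * y)) =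
      fun y => c * exp y + c * q * exp (q * y) :=
    funext fun y => (hasDeriv c c y).deriv
  rw [driftLaplacian, hfun, hderiv, (hasDeriv c (c * q) x).deriv]
  ring

theorem exists_neg_sq_sub_le {lam : ℝ} (hlam : 0 < lam) : ∃ q < 0, q ^ 2 - q ≤ lam := by
  refine ⟨-min 1 (lam / 2), by simp [hlam], ?_⟩
  have h1 : min 1 (lam / 2) ≤ 1 := min_le_left _ _
  have h2 : min 1 (lam / 2) ≤ lam / 2 := min_le_right _ _
  have h3 : 0 < min 1 (lam / 2) := lt_min one_pos (by linarith)
  nlinarith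

theorem driftLaplacian_const_mul_expBarrier_le {c q lam : ℝ} (hc : 0 ≤ c) (hlam : 0 ≤ lam)
    (hq : q ^ 2 - q ≤ lam) (x : ℝ) :
    driftLaplacian (fun y => c * expBarrier q y) x ≤ lam * (c * expBarrier q x) := by
  rw [driftLaplacian_const_mul_expBarrier, expBarrier]
  have hexp := exp_pos x
  have hexpq := exp_pos (q * x)
  calc c * (q ^ 2 - q) * exp (q * x) ≤ c * lam * exp (q * x) := by gcongr
    _ ≤ lam * (c * (exp x + exp (q * x))) := by nlinarith [mul_nonneg hc hlam]

theorem stmt_3 (ψ : ℝ → ℝ) (hC2 : ContDiff ℝ 2 ψ) (hbd : ∃ M, ∀ x, ψ x ≤ M)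
    (hpos : ∀ x, 0 < ψ x) (lam : ℝ)
    (h : ∀ x, lam * ψ x ≤ deriv (deriv ψ) x - deriv ψ x) : lam ≤ 0 := by
  by_contra! hlam
  obtain ⟨M, hM⟩ := hbd
  obtain ⟨q, hq, hqlam⟩ := exists_neg_sq_sub_le hlam
  have hc : 0 < ψ 0 / 4 := by linarith [hpos 0]
  have hcocompact : ∀ᶠ x in cocompact ℝ, ψ x ≤ ψ 0 / 4 * expBarrier q x :=
    (((tendsto_expBarrier_cocompact hq).const_mul_atTop hc).eventually_ge_atTop M).mono
      fun x hx => (hM x).trans hx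
  have hcompare := driftLaplacian_comparison hlam hC2 (contDiff_const.mul (contDiff_expBarrier q))
    h (driftLaplacian_const_mul_expBarrier_le hc.le hlam.le hqlam) hcocompact 0
  norm_num [expBarrier] at hcompare
  linarith [hpos 0]
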